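/- Let G and H be finite graphs. If S is a monophonic position set of the lexicographic product G ∘ H, then for any u ∈ π_G(S), the set {h ∈ V(H) : (u,h) ∈ S} is a monophonic position set of H. -/

import Mathlib

open SimpleGraph

/-- A walk is *monophonic* if it is an induced path: it is a path and the only
edges of the graph between vertices of the walk are the edges of the walk. -/
def SimpleGraph.Walk.IsMonophonic {V : Type*} {G : SimpleGraph V} {u v : V}
    (p : G.Walk u v) : Prop :=
  p.IsPath ∧ ∀ a b : V, a ∈ p.support → b ∈ p.support → G.Adj a b → p.toSubgraph.Adj a b

/-- A set `S` is a *monophonic position set* if no monophonic path contains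
more than two vertices of `S`. -/
def SimpleGraph.IsMPSet {V : Type*} (G : SimpleGraph V) (S : Set V) : Prop :=
  ∀ ⦃u v : V⦄ (p : G.Walk u v), p.IsMonophonic → ({x ∈ S | x ∈ p.support}).ncard ≤ 2

/-- The *monophonic position number*: the largest cardinality of a monophonic
position set. -/
noncomputable def SimpleGraph.mpNum {V : Type*} (G : SimpleGraph V) : ℕ :=
  sSup {n | ∃ S : Set V, G.IsMPSet S ∧ S.ncard = n}

/-- The *lexicographic product* `G ∘ H`: `(g₁,h₁)` is adjacent to `(g₂,h₂)` iff
`g₁ ~ g₂` in `G`, or `g₁ = g₂` and `h₁ ~ h₂` in `H`. -/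
def SimpleGraph.lexProd {α β : Type*} (G : SimpleGraph α) (H : SimpleGraph β) :
    SimpleGraph (α × β) where
  Adj x y := G.Adj x.1 y.1 ∨ (x.1 = y.1 ∧ H.Adj x.2 y.2)
  symm := by
    constructor
    rintro x y (h | ⟨h1, h2⟩)
    · exact Or.inl h.symm
    · exact Or.inr ⟨h1.symm, h2.symm⟩
  loopless := by
    constructor
    rintro x (h | ⟨-, h⟩)
    · exact G.irrefl h
    · exact H.irrefl h

/-! Since `u` is not adjacent to itself, the `H`-layer over `u` is an induced copy of `H` in
`G ∘ H`, and an induced embedding maps monophonic paths to monophonic paths. -/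

namespace SimpleGraph

variable {V W : Type*}

def lexProdLayer (G : SimpleGraph V) (H : SimpleGraph W) (u : V) : H ↪g G.lexProd H where
  toFun h := (u, h)
  inj' _ _ h := congrArg Prod.snd h
  map_rel_iff' {a b} := show G.Adj u u ∨ (u = u ∧ H.Adj a b) ↔ H.Adj a b by simp

variable {G : SimpleGraph V} {G' : SimpleGraph W}

theorem Walk.IsMonophonic.map {u v : V} {p : G.Walk u v} (hp : p.IsMonophonic) (f : G ↪g G') :
    (p.map f.toHom).IsMonophonic := by
  refine ⟨hp.1.map f.injective, ?_⟩
  intro a b ha hb hab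
  rw [Walk.support_map, List.mem_map] at ha hb
  obtain ⟨a, ha, rfl⟩ := ha
  obtain ⟨b, hb, rfl⟩ := hb
  rw [Walk.toSubgraph_map]
  exact ⟨a, b, hp.2 a b ha hb (f.map_adj_iff.mp hab), rfl, rfl⟩

theorem IsMPSet.comap {S : Set W} (hS : G'.IsMPSet S) (f : G ↪g G') : G.IsMPSet (f ⁻¹' S) := by
  intro u v p hp
  have himage : f '' {x ∈ f ⁻¹' S | x ∈ p.support} ⊆ {y ∈ S | y ∈ (p.map f.toHom).support} := by
    rintro _ ⟨x, ⟨hxS, hxp⟩, rfl⟩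
    exact ⟨hxS, (Walk.support_map _ _).symm ▸ List.mem_map_of_mem hxp⟩
  calc {x ∈ f ⁻¹' S | x ∈ p.support}.ncard
      = (f '' {x ∈ f ⁻¹' S | x ∈ p.support}).ncard :=
        (Set.ncard_image_of_injective _ f.injective).symm
    _ ≤ {y ∈ S | y ∈ (p.map f.toHom).support}.ncard :=
        Set.ncard_le_ncard himage ((p.map f.toHom).support.finite_toSet.subset fun _ h => h.2)
    _ ≤ 2 := hS _ (hp.map f)

end SimpleGraph

theorem isMPSet_layer_of_isMPSet_lexProd_general {α β : Type*}
    (G : SimpleGraph α) (H : SimpleGraph β)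
    (S : Set (α × β)) (hS : (G.lexProd H).IsMPSet S)
    (u : α) :
    H.IsMPSet {h : β | (u, h) ∈ S} :=
  hS.comap (lexProdLayer G H u)

/-- If `S` is a monophonic position set of `G ∘ H`, then for any
`u ∈ π_G(S)`, the set `{h | (u,h) ∈ S}` is a monophonic position set of `H`. -/
theorem isMPSet_layer_of_isMPSet_lexProd {α β : Type*} [Fintype α] [Fintype β]
    (G : SimpleGraph α) (H : SimpleGraph β)
    (S : Set (α × β)) (hS : (G.lexProd H).IsMPSet S)
    (u : α) (hu : u ∈ Prod.fst '' S) :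
    H.IsMPSet {h : β | (u, h) ∈ S} :=
  isMPSet_layer_of_isMPSet_lexProd_general G H S hS u
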